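/- Let n, k ∈ ℕ with k ≤ n and let r > 0. Then there exist constants C₁, C₂ > 0 such that for every k-dimensional linear subspace V of ℝⁿ and all linear maps T₁, T₂ : V → V⊥ of operator norm at most r, the graph subspaces W_i = {x + T_i x : x ∈ V} (i = 1, 2) satisfy C₁ · d_proj(W₁, W₂) ≤ ‖T₁ − T₂‖ ≤ C₂ · d_proj(W₁, W₂), where ‖·‖ is the operator norm. -/

import Mathlib

noncomputable section

open Metric Set

/-- Two linear subspaces of ℝⁿ are transverse if the dimension of their span is maximal. -/
def Transv {n : ℕ} (V W : Submodule ℝ (EuclideanSpace ℝ (Fin n))) : Prop :=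
  Module.finrank ℝ ↥(V ⊔ W) = min (Module.finrank ℝ ↥V + Module.finrank ℝ ↥W) n

/-- The space of directions of the affine span of a family of points (Gr(Δ)). -/
def simplexDir {n m : ℕ} (v : Fin m → EuclideanSpace ℝ (Fin n)) :
    Submodule ℝ (EuclideanSpace ℝ (Fin n)) :=
  (affineSpan ℝ (Set.range v)).direction

/-- Orthogonal projection of ℝⁿ onto the orthogonal complement of V, as a map ℝⁿ → ℝⁿ. -/
def projPerp {n : ℕ} (V : Submodule ℝ (EuclideanSpace ℝ (Fin n)))
    (x : EuclideanSpace ℝ (Fin n)) : EuclideanSpace ℝ (Fin n) :=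
  (Vᗮ.orthogonalProjectionOnto x : EuclideanSpace ℝ (Fin n))

/-- Orthogonal projection onto V as a continuous linear endomorphism of ℝⁿ. -/
def projCL {n : ℕ} (V : Submodule ℝ (EuclideanSpace ℝ (Fin n))) :
    EuclideanSpace ℝ (Fin n) →L[ℝ] EuclideanSpace ℝ (Fin n) :=
  V.subtypeL.comp V.orthogonalProjectionOnto

/-- Operator-norm distance between orthogonal projections. -/
def dProj {n : ℕ} (V W : Submodule ℝ (EuclideanSpace ℝ (Fin n))) : ℝ :=
  ‖projCL V - projCL W‖

/-- `p⋆Δ` is `δ`-semitransverse to `𝔉(V)` in `p`. -/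
def SemiT {n m : ℕ} (δ : ℝ) (p : EuclideanSpace ℝ (Fin n))
    (v : Fin m → EuclideanSpace ℝ (Fin n))
    (V : Submodule ℝ (EuclideanSpace ℝ (Fin n))) : Prop :=
  ∀ p' : EuclideanSpace ℝ (Fin n), dist p' p < δ →
    AffineIndependent ℝ (Fin.cons p' v : Fin (m+1) → EuclideanSpace ℝ (Fin n)) ∧
    Transv (simplexDir (Fin.cons p' v : Fin (m+1) → EuclideanSpace ℝ (Fin n))) V

/-- Maximal distance between two vertices of a simplex. -/
def rMax {n m : ℕ} (v : Fin m → EuclideanSpace ℝ (Fin n)) : ℝ :=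
  ⨆ i, ⨆ j, dist (v i) (v j)

/-- Minimal distance between a vertex and the affine span of the opposite face. -/
def rMin {n m : ℕ} (v : Fin m → EuclideanSpace ℝ (Fin n)) : ℝ :=
  ⨅ i, Metric.infDist (v i) (affineSpan ℝ (v '' {i}ᶜ) : Set (EuclideanSpace ℝ (Fin n)))

/-- The degeneracy quantity Λ(Δ). -/
def Lam {n m : ℕ} (v : Fin (m+1) → EuclideanSpace ℝ (Fin n)) : ℝ :=
  sSup {t : ℝ | ∃ lam : Fin m → ℝ,
    ‖∑ i, lam i • (v i.succ - v 0)‖ = 1 ∧ ∃ i, t = |lam i|}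

/-- ε-transversality of a simplex with vertices `v` to the constant foliation `𝔉(V)`. -/
def EpsT {n m : ℕ} (ε : ℝ) (v : Fin (m+1) → EuclideanSpace ℝ (Fin n))
    (V : Submodule ℝ (EuclideanSpace ℝ (Fin n))) : Prop :=
  ∀ D : Submodule ℝ (EuclideanSpace ℝ (Fin n)),
    Module.finrank ℝ ↥D = m → dProj (simplexDir v) D < ε → Transv D V

/-- δ-semitransversality of a simplex in its `i`-th vertex. -/
def STat {n m : ℕ} (δ : ℝ) (w : Fin m → EuclideanSpace ℝ (Fin n)) (i : Fin m)
    (V : Submodule ℝ (EuclideanSpace ℝ (Fin n))) : Prop :=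
  ∀ p' : EuclideanSpace ℝ (Fin n), dist p' (w i) < δ →
    AffineIndependent ℝ (Function.update w i p') ∧
    Transv (simplexDir (Function.update w i p')) V

/-- The coordinate subspace ℝᵏ × {0} of ℝⁿ. -/
def stdFol (n k : ℕ) : Submodule ℝ (EuclideanSpace ℝ (Fin n)) where
  carrier := {x | ∀ i : Fin n, k ≤ (i : ℕ) → x i = 0}
  zero_mem' := fun i _ => rfl
  add_mem' := by
    intro x y hx hy i hi
    show x i + y i = 0
    rw [hx i hi, hy i hi, add_zero]
  smul_mem' := by
    intro c x hx i hi
    show c * x i = 0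
    rw [hx i hi, mul_zero]

/-- Graph of a linear map V → V⊥ as a subspace of ℝⁿ. -/
def graphOf {n : ℕ} {V : Submodule ℝ (EuclideanSpace ℝ (Fin n))}
    (T : ↥V →L[ℝ] ↥Vᗮ) : Submodule ℝ (EuclideanSpace ℝ (Fin n)) :=
  LinearMap.range (V.subtype + Vᗮ.subtype.comp T.toLinearMap)

/-!
If `u = x + T₁ x` lies in the first graph, then `x + T₂ x` lies in the second and is within
`‖T₁ - T₂‖ ‖u‖` of `u`. Since `P₁ - P₂ = P₁ (1 - P₂) - (1 - P₁) P₂` and `P₁ (1 - P₂)` is the adjoint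
of `(1 - P₂) P₁`, this gives `d_proj(W₁, W₂) ≤ 2 ‖T₁ - T₂‖`. Conversely, write `P₂ u = y + T₂ y`;
the `V`- and `V⊥`-components of `u - P₂ u` are `x - y` and `T₁ x - T₂ y`, both of norm at most
`‖(P₁ - P₂) u‖`, so `‖(T₁ - T₂) x‖ ≤ (1 + ‖T₂‖) ‖(P₁ - P₂) u‖ ≤ (1 + r)² d_proj(W₁, W₂) ‖x‖`.
-/

namespace Submodule

variable {E : Type*} [NormedAddCommGroup E] [InnerProductSpace ℝ E]

theorem norm_le_norm_add_of_mem_orthogonal {K : Submodule ℝ E} {a b : E} (ha : a ∈ K)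
    (hb : b ∈ Kᗮ) : ‖a‖ ≤ ‖a + b‖ ∧ ‖b‖ ≤ ‖a + b‖ := by
  have hab := norm_add_sq_eq_norm_sq_add_norm_sq_real (inner_right_of_mem_orthogonal ha hb)
  constructor <;> nlinarith [norm_nonneg a, norm_nonneg b, norm_nonneg (a + b)]

variable {K L : Submodule ℝ E} [K.HasOrthogonalProjection] [L.HasOrthogonalProjection]

theorem norm_starProjection_orthogonal_comp_le {ε : ℝ} (hε : 0 ≤ ε)
    (h : ∀ u ∈ K, ∃ w ∈ L, ‖u - w‖ ≤ ε * ‖u‖) :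
    ‖Lᗮ.starProjection ∘L K.starProjection‖ ≤ ε := by
  refine ContinuousLinearMap.opNorm_le_bound _ hε fun z ↦ ?_
  obtain ⟨w, hwL, hw⟩ := h _ (K.starProjection_apply_mem z)
  calc ‖Lᗮ.starProjection (K.starProjection z)‖
      = ‖Lᗮ.starProjection (K.starProjection z - w)‖ := by
        rw [map_sub, starProjection_orthogonal_apply_eq_zero hwL, sub_zero]
    _ ≤ ‖K.starProjection z - w‖ := norm_starProjection_apply_le _ _
    _ ≤ ε * ‖K.starProjection z‖ := hw
    _ ≤ ε * ‖z‖ := by gcongr; exact norm_starProjection_apply_le K z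

variable [CompleteSpace E]

theorem norm_starProjection_sub_starProjection_le :
    ‖K.starProjection - L.starProjection‖ ≤
      ‖Lᗮ.starProjection ∘L K.starProjection‖ + ‖Kᗮ.starProjection ∘L L.starProjection‖ := by
  set P := K.starProjection
  set Q := L.starProjection
  have hsplit : P - Q = star (Lᗮ.starProjection ∘L P) - Kᗮ.starProjection ∘L Q := by
    rw [starProjection_orthogonal', starProjection_orthogonal', ← ContinuousLinearMap.mul_def,
      ← ContinuousLinearMap.mul_def, star_mul, (isSelfAdjoint_starProjection K).star_eq,
      star_sub, star_one, (isSelfAdjoint_starProjection L).star_eq]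
    noncomm_ring
  rw [hsplit]
  refine (norm_sub_le _ _).trans_eq ?_
  rw [ContinuousLinearMap.star_eq_adjoint, LinearIsometryEquiv.norm_map]

end Submodule

theorem ContinuousLinearMap.norm_sub_apply_le_mul_norm_graph_sub {E : Type*}
    [NormedAddCommGroup E] [InnerProductSpace ℝ E] {V : Submodule ℝ E} (T₁ T₂ : V →L[ℝ] Vᗮ)
    (x y : V) :
    ‖T₁ x - T₂ x‖ ≤ (1 + ‖T₂‖) * ‖((x : E) + T₁ x) - (y + T₂ y)‖ := by
  have hsplit : ((x : E) + T₁ x) - (y + T₂ y) = (x - y : V) + (T₁ x - T₂ y : Vᗮ) := by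
    push_cast; abel
  obtain ⟨hV, hVperp⟩ := Submodule.norm_le_norm_add_of_mem_orthogonal (x - y).2 (T₁ x - T₂ y).2
  rw [← hsplit] at hV hVperp
  calc ‖T₁ x - T₂ x‖ ≤ ‖T₁ x - T₂ y‖ + ‖T₂ y - T₂ x‖ :=
        norm_sub_le_norm_sub_add_norm_sub _ _ _
    _ = ‖T₁ x - T₂ y‖ + ‖T₂ (x - y)‖ := by rw [map_sub, norm_sub_rev (T₂ y)]
    _ ≤ ‖((x : E) + T₁ x) - (y + T₂ y)‖ + ‖T₂‖ * ‖((x : E) + T₁ x) - (y + T₂ y)‖ := by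
        gcongr
        · exact hVperp
        · exact (T₂.le_opNorm _).trans (by gcongr; exact hV)
    _ = (1 + ‖T₂‖) * ‖((x : E) + T₁ x) - (y + T₂ y)‖ := by ring

section Graph

variable {n : ℕ} {V : Submodule ℝ (EuclideanSpace ℝ (Fin n))}

theorem mem_graphOf {T : V →L[ℝ] Vᗮ} {u : EuclideanSpace ℝ (Fin n)} :
    u ∈ graphOf T ↔ ∃ x : V, (x : EuclideanSpace ℝ (Fin n)) + T x = u := by
  simp [graphOf, LinearMap.mem_range]

theorem projCL_eq_starProjection (W : Submodule ℝ (EuclideanSpace ℝ (Fin n))) :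
    projCL W = W.starProjection := rfl

theorem exists_mem_graphOf_norm_sub_le (T₁ T₂ : V →L[ℝ] Vᗮ) {u : EuclideanSpace ℝ (Fin n)}
    (hu : u ∈ graphOf T₁) : ∃ w ∈ graphOf T₂, ‖u - w‖ ≤ ‖T₁ - T₂‖ * ‖u‖ := by
  obtain ⟨x, rfl⟩ := mem_graphOf.1 hu
  refine ⟨x + T₂ x, mem_graphOf.2 ⟨x, rfl⟩, ?_⟩
  calc ‖(x + T₁ x : EuclideanSpace ℝ (Fin n)) - (x + T₂ x)‖ = ‖(T₁ - T₂) x‖ := by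
        rw [add_sub_add_left_eq_sub]; rfl
    _ ≤ ‖T₁ - T₂‖ * ‖x‖ := (T₁ - T₂).le_opNorm x
    _ ≤ ‖T₁ - T₂‖ * ‖(x + T₁ x : EuclideanSpace ℝ (Fin n))‖ := by
        gcongr; exact (Submodule.norm_le_norm_add_of_mem_orthogonal x.2 (T₁ x).2).1

theorem dProj_graphOf_le (T₁ T₂ : V →L[ℝ] Vᗮ) :
    dProj (graphOf T₁) (graphOf T₂) ≤ 2 * ‖T₁ - T₂‖ := by
  have h₁₂ := Submodule.norm_starProjection_orthogonal_comp_le (norm_nonneg (T₁ - T₂))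
    fun _ ↦ exists_mem_graphOf_norm_sub_le T₁ T₂
  have h₂₁ := Submodule.norm_starProjection_orthogonal_comp_le (norm_nonneg (T₂ - T₁))
    fun _ ↦ exists_mem_graphOf_norm_sub_le T₂ T₁
  rw [norm_sub_rev T₂ T₁] at h₂₁
  unfold dProj
  rw [projCL_eq_starProjection, projCL_eq_starProjection]
  linarith [(graphOf T₁).norm_starProjection_sub_starProjection_le (L := graphOf T₂)]

theorem norm_sub_le_mul_dProj_graphOf (T₁ T₂ : V →L[ℝ] Vᗮ) :
    ‖T₁ - T₂‖ ≤ (1 + ‖T₁‖) * (1 + ‖T₂‖) * dProj (graphOf T₁) (graphOf T₂) := by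
  refine ContinuousLinearMap.opNorm_le_bound _ (by unfold dProj; positivity) fun x ↦ ?_
  set u : EuclideanSpace ℝ (Fin n) := x + T₁ x
  have hu : projCL (graphOf T₁) u = u :=
    Submodule.starProjection_eq_self_iff.2 (mem_graphOf.2 ⟨x, rfl⟩)
  obtain ⟨y, hy⟩ := mem_graphOf.1 ((graphOf T₂).starProjection_apply_mem u)
  have hu_norm : ‖u‖ ≤ (1 + ‖T₁‖) * ‖x‖ := by
    calc ‖u‖ ≤ ‖x‖ + ‖T₁ x‖ := norm_add_le _ _
      _ ≤ ‖x‖ + ‖T₁‖ * ‖x‖ := by gcongr; exact T₁.le_opNorm x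
      _ = (1 + ‖T₁‖) * ‖x‖ := by ring
  calc ‖(T₁ - T₂) x‖ ≤ (1 + ‖T₂‖) * ‖u - (y + T₂ y)‖ :=
        T₁.norm_sub_apply_le_mul_norm_graph_sub T₂ x y
    _ = (1 + ‖T₂‖) * ‖(projCL (graphOf T₁) - projCL (graphOf T₂)) u‖ := by
        rw [hy, sub_apply, hu]; rfl
    _ ≤ (1 + ‖T₂‖) * (dProj (graphOf T₁) (graphOf T₂) * ‖u‖) := by
        gcongr; exact ContinuousLinearMap.le_opNorm _ _
    _ ≤ (1 + ‖T₂‖) * (dProj (graphOf T₁) (graphOf T₂) * ((1 + ‖T₁‖) * ‖x‖)) := by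
        gcongr; exact norm_nonneg _
    _ = (1 + ‖T₁‖) * (1 + ‖T₂‖) * dProj (graphOf T₁) (graphOf T₂) * ‖x‖ := by ring

end Graph

theorem stmt_5_general (n k : ℕ) (r : ℝ) (hr : 0 < r) :
    ∃ C₁ > (0:ℝ), ∃ C₂ > (0:ℝ),
      ∀ V : Submodule ℝ (EuclideanSpace ℝ (Fin n)), Module.finrank ℝ ↥V = k →
        ∀ T₁ T₂ : ↥V →L[ℝ] ↥Vᗮ, ‖T₁‖ ≤ r → ‖T₂‖ ≤ r →
          C₁ * dProj (graphOf T₁) (graphOf T₂) ≤ ‖T₁ - T₂‖ ∧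
          ‖T₁ - T₂‖ ≤ C₂ * dProj (graphOf T₁) (graphOf T₂) := by
  refine ⟨1 / 2, by norm_num, (1 + r) ^ 2, by positivity, fun V _ T₁ T₂ h₁ h₂ ↦ ⟨?_, ?_⟩⟩
  · linarith [dProj_graphOf_le T₁ T₂]
  · have hd : 0 ≤ dProj (graphOf T₁) (graphOf T₂) := norm_nonneg _
    calc ‖T₁ - T₂‖ ≤ (1 + ‖T₁‖) * (1 + ‖T₂‖) * dProj (graphOf T₁) (graphOf T₂) :=
          norm_sub_le_mul_dProj_graphOf T₁ T₂
      _ ≤ (1 + r) ^ 2 * dProj (graphOf T₁) (graphOf T₂) := by rw [sq]; gcongr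

theorem stmt_5 (n k : ℕ) (hk : k ≤ n) (r : ℝ) (hr : 0 < r) :
    ∃ C₁ > (0:ℝ), ∃ C₂ > (0:ℝ),
      ∀ V : Submodule ℝ (EuclideanSpace ℝ (Fin n)), Module.finrank ℝ ↥V = k →
        ∀ T₁ T₂ : ↥V →L[ℝ] ↥Vᗮ, ‖T₁‖ ≤ r → ‖T₂‖ ≤ r →
          C₁ * dProj (graphOf T₁) (graphOf T₂) ≤ ‖T₁ - T₂‖ ∧
          ‖T₁ - T₂‖ ≤ C₂ * dProj (graphOf T₁) (graphOf T₂) :=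
  stmt_5_general n k r hr
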